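/- Let A = (2/5)·e^{3/2} and B = 1/5. Let p ≥ 10^6 be a real number, h = ⌊A log p⌋ and r = ⌈B log p⌉. Then (2r / (e(h+1)))^r ≤ p^{-1/2}. -/

import Mathlib

/-! Write `L = log p`. Since `r = ⌈L/5⌉` lies between `L/5` and `L/2`, the number `y = L/(5r)`
satisfies `1 ≤ 5y/2` and `y ≤ 1`, and there `exp (5y/2) ≤ exp (5/2) · y`, because
`exp (5(1-y)/2) ≥ 1 + 5(1-y)/2 ≥ 1/y`. Raising to the power `r`,
`√p = exp (5y/2) ^ r ≤ (exp (5/2) · L/(5r)) ^ r = (e A L/(2r)) ^ r ≤ (e (h+1)/(2r)) ^ r`. -/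

open Real

lemma exp_mul_le_exp_mul {c y : ℝ} (hy₀ : 0 ≤ y) (hcy : 1 ≤ c * y) (hy₁ : y ≤ 1) :
    exp (c * y) ≤ exp c * y := by
  have hsplit : exp c = exp (c * y) * exp (c * (1 - y)) := by rw [← exp_add]; ring_nf
  calc exp (c * y) ≤ exp (c * y) * ((c * (1 - y) + 1) * y) :=
        le_mul_of_one_le_right (exp_pos _).le (by nlinarith [mul_nonneg (sub_nonneg.2 hy₁) hy₀])
    _ ≤ exp (c * y) * (exp (c * (1 - y)) * y) := by gcongr; exact add_one_le_exp _
    _ = exp c * y := by rw [hsplit, mul_assoc]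

lemma exp_half_le_div_pow {B L x : ℝ} {n : ℕ} (hB : 0 < B) (hBL : B * L ≤ n) (hnL : 2 * n ≤ L)
    (hx : 2 * B * exp (1 / (2 * B)) * L ≤ x) :
    exp (L / 2) ≤ (x / (2 * n)) ^ n := by
  obtain rfl | hn := n.eq_zero_or_pos
  · have hL : L = 0 := by push_cast at hBL hnL; nlinarith
    simp [hL]
  have hn' : (0 : ℝ) < n := by exact_mod_cast hn
  have hsplit : exp (L / 2) = exp (1 / (2 * B) * (B * L / n)) ^ n := by
    rw [← exp_nat_mul]; congr 1; field_simp
  rw [hsplit]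
  gcongr
  calc exp (1 / (2 * B) * (B * L / n)) ≤ exp (1 / (2 * B)) * (B * L / n) := by
        apply exp_mul_le_exp_mul
        · exact div_nonneg (mul_nonneg hB.le (by linarith)) hn'.le
        · rw [show 1 / (2 * B) * (B * L / n) = L / (2 * n) by field_simp]
          rwa [one_le_div (by positivity)]
        · rwa [div_le_one hn']
    _ = 2 * B * exp (1 / (2 * B)) * L / (2 * n) := by field_simp
    _ ≤ x / (2 * n) := by gcongr

theorem key_zpow_bound
    (p : ℝ) (hp : (10 : ℝ) ^ 6 ≤ p)
    (A B : ℝ) (hA : A = 2 / 5 * Real.exp (3 / 2)) (hB : B = 1 / 5)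
    (h r : ℤ)
    (hh : h = ⌊A * Real.log p⌋) (hr : r = ⌈B * Real.log p⌉) :
    (2 * (r : ℝ) / (Real.exp 1 * ((h : ℝ) + 1))) ^ r ≤ p ^ (-(1 / 2) : ℝ) := by
  subst hA hB
  have hp₀ : 0 < p := lt_of_lt_of_le (by norm_num) hp
  set L := log p
  have hL : 5 ≤ L := (le_log_iff_exp_le hp₀).2 <| calc
    exp 5 = exp 1 ^ 5 := by rw [← exp_nat_mul]; norm_num
    _ ≤ 3 ^ 5 := by gcongr; exact exp_one_lt_three.le
    _ ≤ p := by linarith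
  have hrL : 1 / 5 * L ≤ r := hr ▸ Int.le_ceil _
  have hr2 : 2 * (r : ℝ) ≤ L := by linarith [hr ▸ Int.ceil_lt_add_one (1 / 5 * L)]
  have hAL := hh ▸ Int.lt_floor_add_one (2 / 5 * exp (3 / 2) * L)
  lift r to ℕ using by exact_mod_cast (by linarith : (0 : ℝ) ≤ r)
  have key : exp (L / 2) ≤ (exp 1 * (h + 1) / (2 * r)) ^ r := by
    refine exp_half_le_div_pow (B := 1 / 5) (by norm_num) (by exact_mod_cast hrL)
      (by exact_mod_cast hr2) ?_
    have hexp : exp (1 / (2 * (1 / 5))) = exp 1 * exp (3 / 2) := by rw [← exp_add]; norm_num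
    rw [hexp]
    nlinarith [exp_pos 1]
  rw [zpow_natCast, rpow_def_of_pos hp₀, show L * -(1 / 2) = -(L / 2) by ring, exp_neg,
    ← inv_div, inv_pow]
  exact inv_anti₀ (exp_pos (L / 2)) key
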